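/- Let 0 < η < δ, let c ∈ ℝ^L, and define P(a) = a if ‖a‖ ≤ δ − η and P(a) = ((δ−η)/‖a‖)·a otherwise. Then any point of B_{c,δ} can be reached from any point of B_{c,δ} by consecutive draws in the proposal balls: for all a, b ∈ B_{c,δ} there exist an integer N ≥ 0 and points x_0 = a, x_1, …, x_N = b in ℝ^L such that for every j ∈ {0,…,N−1}, x_{j+1} ∈ B_{x̂_j, η} where x̂_j = P(x_j − c) + c. -/

import Mathlib

/-!
Inside the closed ball `B_{c, δ - η}` the map `x ↦ P(x - c) + c` is the identity, so there a
proposal step may move by anything up to `η`, and that ball, being connected, is crossed by such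
steps. One step takes any `a` into it, to the proposal centre `P(a - c) + c` itself, and one step
leaves it for `b`, since `P` moves `b - c` by `max (‖b - c‖ - (δ - η)) 0 ≤ η`.
-/

open Relation Metric

theorem Relation.ReflTransGen.exists_seq {α : Type*} {r : α → α → Prop} {a b : α}
    (h : ReflTransGen r a b) :
    ∃ (N : ℕ) (x : ℕ → α), x 0 = a ∧ x N = b ∧ ∀ j < N, r (x j) (x (j + 1)) := by
  induction h using ReflTransGen.head_induction_on with
  | refl => exact ⟨0, fun _ => b, rfl, rfl, by simp⟩
  | @head a a' hab _ ih =>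
    obtain ⟨N, x, hx0, hxN, hx⟩ := ih
    refine ⟨N + 1, Nat.rec a fun j _ => x j, rfl, hxN, ?_⟩
    rintro (_ | j) hj
    · simpa [hx0] using hab
    · exact hx j (by omega)

theorem IsPreconnected.reflTransGen_of_dist_lt {X : Type*} [PseudoMetricSpace X] {s : Set X}
    (hs : IsPreconnected s) {r : X → X → Prop} {ε : ℝ} (hε : 0 < ε)
    (hr : ∀ x ∈ s, ∀ y ∈ s, dist x y < ε → r x y) {x y : X} (hx : x ∈ s) (hy : y ∈ s) :
    ReflTransGen r x y := by
  refine hs.induction₂' (ReflTransGen r) (fun x hx => ?_)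
    (fun _ _ _ _ _ _ => ReflTransGen.trans) hx hy
  filter_upwards [mem_nhdsWithin_of_mem_nhds (ball_mem_nhds x hε), self_mem_nhdsWithin]
    with y hxy hys
  exact ⟨.single (hr x hx y hys (dist_comm x y ▸ hxy)), .single (hr y hys x hx hxy)⟩

section radialProjection

variable {E : Type*} [NormedAddCommGroup E] [NormedSpace ℝ E] {r : ℝ} {a : E}

noncomputable def radialProjection (r : ℝ) (a : E) : E :=
  if ‖a‖ ≤ r then a else (r / ‖a‖) • a

theorem radialProjection_of_norm_le (h : ‖a‖ ≤ r) : radialProjection r a = a := if_pos h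

theorem radialProjection_of_lt_norm (h : r < ‖a‖) : radialProjection r a = (r / ‖a‖) • a :=
  if_neg h.not_ge

theorem norm_radialProjection_le (hr : 0 ≤ r) (a : E) : ‖radialProjection r a‖ ≤ r := by
  rcases le_or_gt ‖a‖ r with h | h
  · rwa [radialProjection_of_norm_le h]
  · have ha : 0 < ‖a‖ := hr.trans_lt h
    rw [radialProjection_of_lt_norm h, norm_smul, Real.norm_of_nonneg (div_nonneg hr ha.le),
      div_mul_cancel₀ r ha.ne']

theorem norm_sub_radialProjection (hr : 0 ≤ r) (a : E) :
    ‖a - radialProjection r a‖ = max (‖a‖ - r) 0 := by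
  rcases le_or_gt ‖a‖ r with h | h
  · rw [radialProjection_of_norm_le h, sub_self, norm_zero, max_eq_right (by linarith)]
  · have ha : 0 < ‖a‖ := hr.trans_lt h
    have hcoef : 0 ≤ 1 - r / ‖a‖ := sub_nonneg.2 ((div_le_one ha).2 h.le)
    have hsub : a - (r / ‖a‖) • a = (1 - r / ‖a‖) • a := by rw [sub_smul, one_smul]
    rw [radialProjection_of_lt_norm h, hsub, norm_smul, Real.norm_of_nonneg hcoef,
      sub_mul, one_mul, div_mul_cancel₀ r ha.ne', max_eq_left (by linarith)]

end radialProjection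

theorem ball_reachable_by_consecutive_proposal_draws_general
    {L : ℕ} (η δ : ℝ) (hη : 0 < η) (hηδ : η < δ) (c : EuclideanSpace ℝ (Fin L))
    (P : EuclideanSpace ℝ (Fin L) → EuclideanSpace ℝ (Fin L))
    (hP : ∀ a, P a = if ‖a‖ ≤ δ - η then a else ((δ - η) / ‖a‖) • a)
    (a b : EuclideanSpace ℝ (Fin L)) (hb : ‖b - c‖ ≤ δ) :
    ∃ (N : ℕ) (x : ℕ → EuclideanSpace ℝ (Fin L)),
      x 0 = a ∧ x N = b ∧
      ∀ j < N, ‖x (j + 1) - (P (x j - c) + c)‖ ≤ η := by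
  have hr : 0 ≤ δ - η := by linarith
  obtain rfl : P = radialProjection (δ - η) := funext hP
  let step (x y : EuclideanSpace ℝ (Fin L)) : Prop :=
    ‖y - (radialProjection (δ - η) (x - c) + c)‖ ≤ η
  set A := c + radialProjection (δ - η) (a - c)
  set B := c + radialProjection (δ - η) (b - c)
  have hA : A ∈ closedBall c (δ - η) := by
    simpa [A, dist_eq_norm] using norm_radialProjection_le hr (a - c)
  have hB : B ∈ closedBall c (δ - η) := by
    simpa [B, dist_eq_norm] using norm_radialProjection_le hr (b - c)
  have enter : step a A := by simpa [step, A, add_comm c] using hη.le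
  have walk : ReflTransGen step A B := by
    refine (convex_closedBall c _).isPreconnected.reflTransGen_of_dist_lt hη
      (fun x hx y _ hxy => ?_) hA hB
    rw [mem_closedBall, dist_eq_norm] at hx
    simpa [step, radialProjection_of_norm_le hx, dist_eq_norm, norm_sub_rev] using hxy.le
  have exit : step B b := by
    have hBc : B - c = radialProjection (δ - η) (b - c) := by simp [B]
    rw [mem_closedBall, dist_eq_norm, hBc] at hB
    simp only [step, hBc, radialProjection_of_norm_le hB]
    rw [sub_add_eq_sub_sub, sub_right_comm, norm_sub_radialProjection hr]
    exact max_le (by linarith) hη.le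
  exact ((ReflTransGen.single enter).trans (walk.tail exit)).exists_seq

theorem ball_reachable_by_consecutive_proposal_draws
    {L : ℕ} (η δ : ℝ) (hη : 0 < η) (hηδ : η < δ) (c : EuclideanSpace ℝ (Fin L))
    (P : EuclideanSpace ℝ (Fin L) → EuclideanSpace ℝ (Fin L))
    (hP : ∀ a, P a = if ‖a‖ ≤ δ - η then a else ((δ - η) / ‖a‖) • a)
    (a b : EuclideanSpace ℝ (Fin L)) (ha : ‖a - c‖ ≤ δ) (hb : ‖b - c‖ ≤ δ) :
    ∃ (N : ℕ) (x : ℕ → EuclideanSpace ℝ (Fin L)),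
      x 0 = a ∧ x N = b ∧
      ∀ j < N, ‖x (j + 1) - (P (x j - c) + c)‖ ≤ η :=
  ball_reachable_by_consecutive_proposal_draws_general η δ hη hηδ c P hP a b hb
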